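/- arXiv:1705.09344 — 2 statements merged into one kernel-verified Lean document; each statement's English description precedes it below -/
import Mathlib

section
/- The symmetrized function β(x₁,x₂,y₁,y₂,α) = Sym_{x₁,x₂} [ ϑ(α y₁/x₁) ϑ(y₂/x₁) ϑ(h y₁/x₂) ϑ(α h y₂/x₂) · ϑ(h x₂/x₁)/ϑ(x₂/x₁) ] is symmetric under exchanging y₁ and y₂. -/
/-!
Write `P_w(u) = θ(u + w) θ(u - w)`. Exchanging `y₁` and `y₂` changes the product of the first
four theta factors of the `(x₁, x₂)`-summand of `β` by `-θ(H + x₁ - x₂) K`, where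
`K = θ(y₁ - y₂) θ(A + H + y₁ + y₂ - x₁ - x₂) θ(A)` is symmetric in `x₁, x₂`; after
multiplication by `θ(H + x₂ - x₁)` the two changes cancel in the symmetrization. The first
claim is Weierstrass' three-term identity `P_a(u) P_b(v) - P_b(u) P_a(v) = P_b(a) P_v(u)`
at suitable half-sums.

For generic `v`, both sides of the identity are entire in `u`, `1`-periodic and
quasi-periodic under `u ↦ u + τ` with the same multiplier as `P_v`, and their difference
vanishes at the zeros `±v + Λ` of `P_v`, which are simple. Hence the difference divided by
`P_v` is an entire elliptic function, constant by Liouville, and zero since the difference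
vanishes at `u = a`. Continuity in `v` removes the genericity assumption. The facts on `θ`
this needs (oddness, quasi-periodicity, zeros exactly at `Λ = ℤ + τℤ`, all simple) come from
the product formula.
-/

open Complex

/-- The theta function in additive variables: `θ(u) = ϑ(e^{2πiu})` with
`ϑ(x) = (x^{1/2} − x^{−1/2}) ∏_{s≥0}(1−q^{s+1}x)(1−q^{s+1}/x)`, `q = e^{2πiτ}`,
`x^{1/2} = e^{πiu}`. -/
noncomputable def ellTheta (τ u : ℂ) : ℂ :=
  (Complex.exp ((Real.pi : ℂ) * Complex.I * u)
      - Complex.exp (-((Real.pi : ℂ) * Complex.I * u))) *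
    (∏' s : ℕ, (1 - Complex.exp (2 * (Real.pi : ℂ) * Complex.I * τ) ^ (s + 1) *
        Complex.exp (2 * (Real.pi : ℂ) * Complex.I * u))) *
    (∏' s : ℕ, (1 - Complex.exp (2 * (Real.pi : ℂ) * Complex.I * τ) ^ (s + 1) *
        Complex.exp (-(2 * (Real.pi : ℂ) * Complex.I * u))))

open Filter Topology Function Set Real

noncomputable section

section QuasiPeriodic

variable {f g m : ℂ → ℂ} {z c : ℂ}

/-- At a simple zero of `g` that is also a zero of `f`, this is the holomorphic extension of
`f / g`. -/
def lhopitalDiv (f g : ℂ → ℂ) (z : ℂ) : ℂ :=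
  if g z = 0 then deriv f z / deriv g z else f z / g z

lemma lhopitalDiv_eventuallyEq_dslope_div (hg : DifferentiableAt ℂ g z) (hgz : g z = 0)
    (hfz : f z = 0) (hg' : deriv g z ≠ 0) :
    lhopitalDiv f g =ᶠ[𝓝 z] fun w => dslope f z w / dslope g z w := by
  have hcont : ContinuousAt (dslope g z) z := continuousAt_dslope_same.2 hg
  filter_upwards [hcont.eventually_ne (by rwa [dslope_same])] with w hw
  rcases eq_or_ne w z with rfl | hwz
  · simp [lhopitalDiv, hgz, dslope_same]
  · have factor : ∀ h : ℂ → ℂ, h z = 0 → h w = (w - z) * dslope h z w := fun h hz => by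
      rw [← smul_eq_mul, sub_smul_dslope, hz, sub_zero]
    have hgw : g w ≠ 0 := by
      rw [factor g hgz]; exact mul_ne_zero (sub_ne_zero.2 hwz) hw
    rw [lhopitalDiv, if_neg hgw, factor f hfz, factor g hgz,
      mul_div_mul_left _ _ (sub_ne_zero.2 hwz)]

lemma differentiable_lhopitalDiv (hf : Differentiable ℂ f) (hg : Differentiable ℂ g)
    (hzero : ∀ z, g z = 0 → f z = 0 ∧ deriv g z ≠ 0) :
    Differentiable ℂ (lhopitalDiv f g) := by
  intro z
  by_cases hgz : g z = 0
  · obtain ⟨hfz, hg'⟩ := hzero z hgz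
    have hslope : ∀ h : ℂ → ℂ, Differentiable ℂ h → Differentiable ℂ (dslope h z) := fun h hh =>
      differentiableOn_univ.1 ((differentiableOn_dslope univ_mem).2 hh.differentiableOn)
    exact ((hslope f hf z).div (hslope g hg z) (by rwa [dslope_same])).congr_of_eventuallyEq
      (lhopitalDiv_eventuallyEq_dslope_div (hg z) hgz hfz hg')
  · have hquot : lhopitalDiv f g =ᶠ[𝓝 z] fun w => f w / g w := by
      filter_upwards [(hg z).continuousAt.eventually_ne hgz] with w hw using if_neg hw
    exact ((hf z).div (hg z) hgz).congr_of_eventuallyEq hquot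

lemma deriv_add_of_quasiperiodic (hf : DifferentiableAt ℂ f z) (hm : DifferentiableAt ℂ m z)
    (hfm : ∀ w, f (w + c) = m w * f w) (hz : f z = 0) :
    deriv f (z + c) = m z * deriv f z := by
  rw [← deriv_comp_add_const, funext hfm, deriv_fun_mul hm hf, hz, mul_zero, zero_add]

lemma apply_add_eq_zero_iff_of_quasiperiodic (hm0 : ∀ z, m z ≠ 0)
    (hfm : ∀ z, f (z + c) = m z * f z) (z : ℂ) : f (z + c) = 0 ↔ f z = 0 := by
  rw [hfm, mul_eq_zero, or_iff_right (hm0 z)]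

lemma simpleZero_add_iff_of_quasiperiodic (hf : Differentiable ℂ f) (hm : Differentiable ℂ m)
    (hm0 : ∀ z, m z ≠ 0) (hfm : ∀ z, f (z + c) = m z * f z) (z : ℂ) :
    f (z + c) = 0 ∧ deriv f (z + c) ≠ 0 ↔ f z = 0 ∧ deriv f z ≠ 0 := by
  rw [apply_add_eq_zero_iff_of_quasiperiodic hm0 hfm]
  refine and_congr_right fun hz => ?_
  rw [deriv_add_of_quasiperiodic (hf z) (hm z) hfm hz, mul_ne_zero_iff, and_iff_right (hm0 z)]

lemma lhopitalDiv_add_of_quasiperiodic (hf : Differentiable ℂ f) (hg : Differentiable ℂ g)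
    (hm : Differentiable ℂ m) (hm0 : ∀ z, m z ≠ 0) (hfm : ∀ z, f (z + c) = m z * f z)
    (hgm : ∀ z, g (z + c) = m z * g z) (hfg : ∀ z, g z = 0 → f z = 0) (z : ℂ) :
    lhopitalDiv f g (z + c) = lhopitalDiv f g z := by
  have hgc := apply_add_eq_zero_iff_of_quasiperiodic hm0 hgm z
  by_cases hgz : g z = 0
  · rw [lhopitalDiv, lhopitalDiv, if_pos (hgc.2 hgz), if_pos hgz,
      deriv_add_of_quasiperiodic (hf z) (hm z) hfm (hfg z hgz),
      deriv_add_of_quasiperiodic (hg z) (hm z) hgm hgz, mul_div_mul_left _ _ (hm0 z)]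
  · rw [lhopitalDiv, lhopitalDiv, if_neg (mt hgc.1 hgz), if_neg hgz, hfm, hgm,
      mul_div_mul_left _ _ (hm0 z)]

end QuasiPeriodic

section DoublyPeriodic

variable {τ : ℂ}

lemma isBounded_range_of_periodic {E : Type*} [PseudoMetricSpace E] {f : ℂ → E}
    (hτ : τ.im ≠ 0) (hf : Continuous f) (h1 : Periodic f 1) (h2 : Periodic f τ) :
    Bornology.IsBounded (range f) := by
  have hK : IsCompact ((fun p : ℝ × ℝ => (p.1 : ℂ) + p.2 * τ) '' (Icc 0 1 ×ˢ Icc 0 1)) :=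
    (isCompact_Icc.prod isCompact_Icc).image (by fun_prop)
  refine (hK.image hf).isBounded.subset ?_
  rintro _ ⟨u, rfl⟩
  set t := u.im / τ.im
  set s := u.re - t * τ.re
  have hu : u = Int.fract s + Int.fract t * τ + ⌊s⌋ * 1 + ⌊t⌋ * τ := by
    have hu₀ : u = s + t * τ := by
      apply Complex.ext
      · simp [s, t]
      · simp [s, t]; field_simp
    have hs : ((⌊s⌋ : ℤ) : ℂ) + ((Int.fract s : ℝ) : ℂ) = s := mod_cast Int.floor_add_fract s
    have ht : ((⌊t⌋ : ℤ) : ℂ) + ((Int.fract t : ℝ) : ℂ) = t := mod_cast Int.floor_add_fract t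
    linear_combination hu₀ - hs - τ * ht
  refine ⟨_, ⟨(Int.fract s, Int.fract t), ⟨⟨Int.fract_nonneg s, (Int.fract_lt_one s).le⟩,
    ⟨Int.fract_nonneg t, (Int.fract_lt_one t).le⟩⟩, rfl⟩, ?_⟩
  rw [hu, h2.int_mul, h1.int_mul]

lemma Differentiable.apply_eq_apply_of_periodic {E : Type*} [NormedAddCommGroup E]
    [NormedSpace ℂ E] {f : ℂ → E} (hf : Differentiable ℂ f) (hτ : τ.im ≠ 0) (h1 : Periodic f 1)
    (h2 : Periodic f τ) (z w : ℂ) : f z = f w :=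
  hf.apply_eq_apply_of_bounded (isBounded_range_of_periodic hτ hf.continuous h1 h2) z w

theorem exists_eq_const_mul_of_quasiperiodic {f g m : ℂ → ℂ} (hτ : τ.im ≠ 0)
    (hf : Differentiable ℂ f) (hg : Differentiable ℂ g) (hm : Differentiable ℂ m)
    (hm0 : ∀ z, m z ≠ 0) (hf1 : Periodic f 1) (hg1 : Periodic g 1)
    (hfτ : ∀ z, f (z + τ) = m z * f z) (hgτ : ∀ z, g (z + τ) = m z * g z)
    (hzero : ∀ z, g z = 0 → f z = 0 ∧ deriv g z ≠ 0) :
    ∃ c, ∀ z, f z = c * g z := by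
  have hfg z (hz : g z = 0) : f z = 0 := (hzero z hz).1
  have hQ1 : Periodic (lhopitalDiv f g) 1 :=
    lhopitalDiv_add_of_quasiperiodic hf hg (differentiable_const 1) (fun _ => one_ne_zero)
      (by simpa using hf1) (by simpa using hg1) hfg
  have hQτ : Periodic (lhopitalDiv f g) τ :=
    lhopitalDiv_add_of_quasiperiodic hf hg hm hm0 hfτ hgτ hfg
  refine ⟨lhopitalDiv f g 0, fun z => ?_⟩
  by_cases hgz : g z = 0
  · rw [hfg z hgz, hgz, mul_zero]
  · rw [← (differentiable_lhopitalDiv hf hg hzero).apply_eq_apply_of_periodic hτ hQ1 hQτ z,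
      lhopitalDiv, if_neg hgz, div_mul_cancel₀ _ hgz]

end DoublyPeriodic

section QProd

def qProd (q w : ℂ) : ℂ := ∏' n : ℕ, (1 - q ^ (n + 1) * w)

variable {q : ℂ}

lemma summable_norm_pow_succ_mul (hq : ‖q‖ < 1) (r : ℝ) :
    Summable fun n : ℕ => ‖q‖ ^ (n + 1) * r :=
  ((summable_nat_add_iff 1).2 (summable_geometric_of_lt_one (norm_nonneg q) hq)).mul_right r

lemma multipliable_one_sub_pow_succ_mul (hq : ‖q‖ < 1) (w : ℂ) :
    Multipliable fun n : ℕ => 1 - q ^ (n + 1) * w := by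
  simpa [sub_eq_add_neg] using multipliable_one_add_of_summable (f := fun n => -(q ^ (n + 1) * w))
    (by simpa using summable_norm_pow_succ_mul hq ‖w‖)

lemma qProd_eq_zero_iff (hq : ‖q‖ < 1) {w : ℂ} :
    qProd q w = 0 ↔ ∃ n : ℕ, q ^ (n + 1) * w = 1 := by
  refine ⟨fun h => ?_, fun ⟨n, hn⟩ => tprod_of_exists_eq_zero ⟨n, by rw [hn, sub_self]⟩⟩
  by_contra! hne
  refine tprod_one_add_ne_zero_of_summable (f := fun n => -(q ^ (n + 1) * w)) (fun n => ?_)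
    (by simpa using summable_norm_pow_succ_mul hq ‖w‖) (by simpa [qProd, sub_eq_add_neg] using h)
  rw [← sub_eq_add_neg, sub_ne_zero]
  exact (hne n).symm

lemma qProd_eq_mul_qProd (hq : ‖q‖ < 1) (w : ℂ) :
    qProd q w = (1 - q * w) * qProd q (q * w) := by
  have hshift : (fun n : ℕ => 1 - q ^ (n + 1 + 1) * w) = fun n => 1 - q ^ (n + 1) * (q * w) := by
    ext n; ring
  rw [qProd, tprod_eq_zero_mul' (hshift ▸ multipliable_one_sub_pow_succ_mul hq (q * w)), hshift,
    zero_add, pow_one, qProd]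

lemma differentiable_qProd (hq : ‖q‖ < 1) : Differentiable ℂ (qProd q) := by
  intro w₀
  have hprod := (summable_norm_pow_succ_mul hq (‖w₀‖ + 1)).hasProdLocallyUniformlyOn_nat_one_add
    (f := fun n w => -(q ^ (n + 1) * w)) (Metric.isOpen_ball (x := 0) (ε := ‖w₀‖ + 1))
    (.of_forall fun n w hw => by
      rw [norm_neg, norm_mul, norm_pow]
      gcongr
      exact (mem_ball_zero_iff.1 hw).le)
    (fun n => by fun_prop)
  have hd := hprod.differentiableOn (.of_forall fun _ => by
    simpa [Finset.prod_fn] using DifferentiableOn.finsetProd (fun _ _ => by fun_prop))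
    Metric.isOpen_ball
  simp only [← sub_eq_add_neg] at hd
  exact hd.differentiableAt (Metric.isOpen_ball.mem_nhds (by simp))

end QProd

section ThetaProd

/-- The paper's `ϑ(x)` with `y = x^{1/2}`. -/
def thetaProd (q y : ℂ) : ℂ := (y - y⁻¹) * qProd q (y ^ 2) * qProd q (y ^ 2)⁻¹

variable {q : ℂ}

lemma thetaProd_neg (q y : ℂ) : thetaProd q (-y) = -thetaProd q y := by
  simp only [thetaProd, neg_sq, inv_neg]; ring

lemma thetaProd_inv (q y : ℂ) : thetaProd q y⁻¹ = -thetaProd q y := by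
  simp only [thetaProd, inv_pow, inv_inv]; ring

lemma thetaProd_mul (hq : ‖q‖ < 1) {p y : ℂ} (hp : p ^ 2 = q) (hp0 : p ≠ 0) (hy : y ≠ 0) :
    thetaProd q (p * y) = -(p * y ^ 2)⁻¹ * thetaProd q y := by
  have h₁ : qProd q (y ^ 2) = (1 - q * y ^ 2) * qProd q ((p * y) ^ 2) := by
    rw [qProd_eq_mul_qProd hq, ← hp, mul_pow]
  have h₂ : qProd q ((p * y) ^ 2)⁻¹ = (1 - (y ^ 2)⁻¹) * qProd q (y ^ 2)⁻¹ := by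
    rw [qProd_eq_mul_qProd hq, ← hp, mul_pow, mul_inv, ← mul_assoc,
      mul_inv_cancel₀ (pow_ne_zero 2 hp0), one_mul]
  rw [thetaProd, thetaProd, h₁, h₂, ← hp]
  field_simp
  ring

end ThetaProd

section Lattice

def periodLattice (τ : ℂ) : AddSubgroup ℂ := AddSubgroup.closure {1, τ}

variable {τ : ℂ}

lemma one_mem_periodLattice : (1 : ℂ) ∈ periodLattice τ := AddSubgroup.subset_closure (by simp)

lemma self_mem_periodLattice : τ ∈ periodLattice τ := AddSubgroup.subset_closure (by simp)

lemma intCast_mem_periodLattice (n : ℤ) : (n : ℂ) ∈ periodLattice τ := by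
  simpa using zsmul_mem one_mem_periodLattice n

lemma natCast_mul_self_mem_periodLattice (n : ℕ) : (n * τ : ℂ) ∈ periodLattice τ := by
  simpa using nsmul_mem self_mem_periodLattice n

lemma countable_periodLattice : (periodLattice τ : Set ℂ).Countable :=
  (countable_range fun p : ℤ × ℤ => p.1 • (1 : ℂ) + p.2 • τ).mono fun _ hz => by
    obtain ⟨m, n, h⟩ := AddSubgroup.mem_closure_pair.1 hz
    exact ⟨(m, n), h⟩

lemma mem_periodLattice_of_exp_eq_one {z : ℂ} (h : cexp (2 * π * I * z) = 1) :
    z ∈ periodLattice τ := by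
  obtain ⟨n, hn⟩ := Complex.exp_eq_one_iff.1 h
  have hz : z = n := mul_left_cancel₀ two_pi_I_ne_zero (by rw [hn]; ring)
  exact hz ▸ intCast_mem_periodLattice n

lemma add_mem_periodLattice_iff {P : ℂ → Prop} (h₁ : ∀ z, P (z + 1) ↔ P z)
    (hτ : ∀ z, P (z + τ) ↔ P z) {w : ℂ} (hw : w ∈ periodLattice τ) (z : ℂ) :
    P (z + w) ↔ P z := by
  induction hw using AddSubgroup.closure_induction generalizing z with
  | mem w hw =>
    rcases hw with rfl | rfl
    exacts [h₁ z, hτ z]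
  | zero => rw [add_zero]
  | add x y _ _ hx hy => rw [← add_assoc, hy, hx]
  | neg x _ hx => rw [← hx, neg_add_cancel_right]

end Lattice

section EllTheta

variable {τ : ℂ}

lemma norm_exp_two_pi_I_mul_lt_one (hτ : 0 < τ.im) : ‖cexp (2 * π * I * τ)‖ < 1 :=
  UpperHalfPlane.norm_exp_two_pi_I_lt_one ⟨τ, hτ⟩

lemma ellTheta_eq_thetaProd (τ u : ℂ) :
    ellTheta τ u = thetaProd (cexp (2 * π * I * τ)) (cexp (π * I * u)) := by
  have h₁ : cexp (2 * π * I * u) = cexp (π * I * u) ^ 2 := by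
    rw [← Complex.exp_nat_mul]; ring_nf
  rw [ellTheta, thetaProd, qProd, qProd, Complex.exp_neg, Complex.exp_neg, h₁]

lemma ellTheta_neg (τ u : ℂ) : ellTheta τ (-u) = -ellTheta τ u := by
  rw [ellTheta_eq_thetaProd, ellTheta_eq_thetaProd, mul_neg, Complex.exp_neg, thetaProd_inv]

lemma ellTheta_zero (τ : ℂ) : ellTheta τ 0 = 0 :=
  self_eq_neg.1 (by simpa using ellTheta_neg τ 0)

lemma ellTheta_add_one (τ u : ℂ) : ellTheta τ (u + 1) = -ellTheta τ u := by
  rw [ellTheta_eq_thetaProd, ellTheta_eq_thetaProd, mul_add, mul_one, Complex.exp_add,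
    Complex.exp_pi_mul_I, mul_neg_one, thetaProd_neg]

lemma ellTheta_add_tau (hτ : 0 < τ.im) (u : ℂ) :
    ellTheta τ (u + τ) = -cexp (-(π * I * (τ + 2 * u))) * ellTheta τ u := by
  have hp : cexp (π * I * τ) ^ 2 = cexp (2 * π * I * τ) := by
    rw [← Complex.exp_nat_mul]; ring_nf
  have hmul : cexp (-(π * I * (τ + 2 * u))) = (cexp (π * I * τ) * cexp (π * I * u) ^ 2)⁻¹ := by
    rw [Complex.exp_neg, ← Complex.exp_nat_mul, ← Complex.exp_add]; ring_nf
  rw [ellTheta_eq_thetaProd, ellTheta_eq_thetaProd, mul_add, Complex.exp_add,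
    mul_comm (cexp (π * I * u)), thetaProd_mul (norm_exp_two_pi_I_mul_lt_one hτ) hp
      (Complex.exp_ne_zero _) (Complex.exp_ne_zero _), hmul]

lemma ellTheta_eq_qProd (τ u : ℂ) : ellTheta τ u =
    (cexp (π * I * u) - cexp (-(π * I * u))) * qProd (cexp (2 * π * I * τ)) (cexp (2 * π * I * u)) *
      qProd (cexp (2 * π * I * τ)) (cexp (-(2 * π * I * u))) := rfl

lemma differentiable_ellTheta (hτ : 0 < τ.im) : Differentiable ℂ (ellTheta τ) := by
  have := differentiable_qProd (norm_exp_two_pi_I_mul_lt_one hτ)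
  simp only [funext (ellTheta_eq_qProd τ)]
  fun_prop

lemma qProd_one_ne_zero {q : ℂ} (hq : ‖q‖ < 1) : qProd q 1 ≠ 0 := by
  rw [Ne, qProd_eq_zero_iff hq]
  rintro ⟨n, hn⟩
  have : ‖q‖ ^ (n + 1) < 1 := pow_lt_one₀ (norm_nonneg q) hq n.succ_ne_zero
  rw [← norm_pow, ← mul_one (q ^ (n + 1)), hn, norm_one] at this
  exact this.false

lemma deriv_ellTheta_zero_ne_zero (hτ : 0 < τ.im) : deriv (ellTheta τ) 0 ≠ 0 := by
  have hq := norm_exp_two_pi_I_mul_lt_one hτ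
  set W : ℂ → ℂ := fun u => qProd (cexp (2 * π * I * τ)) (cexp (2 * π * I * u)) *
      qProd (cexp (2 * π * I * τ)) (cexp (-(2 * π * I * u)))
  have hW : DifferentiableAt ℂ W 0 := by
    have := differentiable_qProd hq
    fun_prop
  have hS : HasDerivAt (fun u => cexp (π * I * u) - cexp (-(π * I * u))) (2 * π * I) 0 := by
    have h := ((hasDerivAt_id (0 : ℂ)).const_mul (π * I)).cexp.fun_sub
      ((hasDerivAt_id (0 : ℂ)).const_mul (π * I)).fun_neg.cexp
    exact h.congr_deriv (by simp; ring)
  have hθ : HasDerivAt (ellTheta τ) (2 * π * I * W 0) 0 := by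
    have hfun : ellTheta τ = fun u => (cexp (π * I * u) - cexp (-(π * I * u))) * W u :=
      funext fun u => by rw [ellTheta_eq_qProd, mul_assoc]
    rw [hfun]
    exact (hS.fun_mul hW.hasDerivAt).congr_deriv (by simp)
  rw [hθ.deriv]
  simp only [W, mul_zero, neg_zero, Complex.exp_zero]
  exact mul_ne_zero two_pi_I_ne_zero (mul_ne_zero (qProd_one_ne_zero hq) (qProd_one_ne_zero hq))

lemma mem_periodLattice_of_ellTheta_eq_zero (hτ : 0 < τ.im) {u : ℂ} (h : ellTheta τ u = 0) :
    u ∈ periodLattice τ := by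
  have hq := norm_exp_two_pi_I_mul_lt_one hτ
  have hshift (n : ℕ) (z : ℂ) : cexp (2 * π * I * τ) ^ (n + 1) * cexp (2 * π * I * z) =
      cexp (2 * π * I * (((n + 1 : ℕ) : ℂ) * τ + z)) := by
    rw [← Complex.exp_nat_mul, ← Complex.exp_add]; ring_nf
  rw [ellTheta_eq_qProd, mul_eq_zero, mul_eq_zero] at h
  rcases h with (h | h) | h
  · refine mem_periodLattice_of_exp_eq_one ?_
    rw [sub_eq_zero] at h
    rw [show 2 * π * I * u = π * I * u - -(π * I * u) by ring, Complex.exp_sub, h,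
      div_self (Complex.exp_ne_zero _)]
  · obtain ⟨n, hn⟩ := (qProd_eq_zero_iff hq).1 h
    rw [hshift] at hn
    simpa using sub_mem (mem_periodLattice_of_exp_eq_one hn)
      (natCast_mul_self_mem_periodLattice (τ := τ) (n + 1))
  · obtain ⟨n, hn⟩ := (qProd_eq_zero_iff hq).1 h
    rw [← mul_neg, hshift] at hn
    simpa using sub_mem (natCast_mul_self_mem_periodLattice (τ := τ) (n + 1))
      (mem_periodLattice_of_exp_eq_one hn)

lemma ellTheta_eq_zero_and_deriv_ne_zero (hτ : 0 < τ.im) {w : ℂ} (hw : w ∈ periodLattice τ) :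
    ellTheta τ w = 0 ∧ deriv (ellTheta τ) w ≠ 0 := by
  have hθ := differentiable_ellTheta hτ
  have h₁ := simpleZero_add_iff_of_quasiperiodic hθ (differentiable_const (-1))
    (fun _ => by norm_num) fun z => by rw [ellTheta_add_one, neg_one_mul]
  have hτ' := simpleZero_add_iff_of_quasiperiodic hθ (by fun_prop)
    (fun _ => neg_ne_zero.2 (Complex.exp_ne_zero _)) (ellTheta_add_tau hτ)
  simpa using (add_mem_periodLattice_iff
    (P := fun z => ellTheta τ z = 0 ∧ deriv (ellTheta τ) z ≠ 0) h₁ hτ' hw 0).2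
    ⟨ellTheta_zero τ, deriv_ellTheta_zero_ne_zero hτ⟩

lemma ellTheta_eq_zero_iff (hτ : 0 < τ.im) {u : ℂ} : ellTheta τ u = 0 ↔ u ∈ periodLattice τ :=
  ⟨mem_periodLattice_of_ellTheta_eq_zero hτ, fun hu => (ellTheta_eq_zero_and_deriv_ne_zero hτ hu).1⟩

end EllTheta

section ThreeTerm

variable {τ : ℂ}

def thetaPair (τ w u : ℂ) : ℂ := ellTheta τ (u + w) * ellTheta τ (u - w)

lemma thetaPair_add_one (τ w u : ℂ) : thetaPair τ w (u + 1) = thetaPair τ w u := by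
  rw [thetaPair, thetaPair, add_right_comm, add_sub_right_comm, ellTheta_add_one,
    ellTheta_add_one, neg_mul_neg]

lemma thetaPair_add_tau (hτ : 0 < τ.im) (w u : ℂ) :
    thetaPair τ w (u + τ) = cexp (-(2 * π * I * (τ + 2 * u))) * thetaPair τ w u := by
  have hmul : cexp (-(π * I * (τ + 2 * (u + w)))) * cexp (-(π * I * (τ + 2 * (u - w)))) =
      cexp (-(2 * π * I * (τ + 2 * u))) := by
    rw [← Complex.exp_add]; ring_nf
  rw [thetaPair, thetaPair, add_right_comm, add_sub_right_comm, ellTheta_add_tau hτ,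
    ellTheta_add_tau hτ, ← hmul]
  ring

lemma thetaPair_neg (τ w u : ℂ) : thetaPair τ w (-u) = thetaPair τ w u := by
  rw [thetaPair, thetaPair, show -u + w = -(u - w) by ring, show -u - w = -(u + w) by ring,
    ellTheta_neg, ellTheta_neg, neg_mul_neg, mul_comm]

lemma thetaPair_self (τ w : ℂ) : thetaPair τ w w = 0 := by
  rw [thetaPair, sub_self, ellTheta_zero, mul_zero]

lemma thetaPair_comm (τ w u : ℂ) : thetaPair τ w u = -thetaPair τ u w := by
  rw [thetaPair, thetaPair, add_comm, ← neg_sub u w, ellTheta_neg]; ring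

lemma differentiable_thetaPair (hτ : 0 < τ.im) (w : ℂ) : Differentiable ℂ (thetaPair τ w) := by
  have := differentiable_ellTheta hτ
  unfold thetaPair
  fun_prop

lemma thetaPair_eq_zero_iff (hτ : 0 < τ.im) {w u : ℂ} :
    thetaPair τ w u = 0 ↔ u + w ∈ periodLattice τ ∨ u - w ∈ periodLattice τ := by
  rw [thetaPair, mul_eq_zero, ellTheta_eq_zero_iff hτ, ellTheta_eq_zero_iff hτ]

lemma deriv_thetaPair_ne_zero (hτ : 0 < τ.im) {w u : ℂ} (h2w : 2 * w ∉ periodLattice τ)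
    (hu : thetaPair τ w u = 0) : deriv (thetaPair τ w) u ≠ 0 := by
  have hθ := differentiable_ellTheta hτ
  have hd : HasDerivAt (thetaPair τ w) (deriv (ellTheta τ) (u + w) * ellTheta τ (u - w) +
      ellTheta τ (u + w) * deriv (ellTheta τ) (u - w)) u :=
    ((hθ _).hasDerivAt.comp_add_const u w).fun_mul ((hθ _).hasDerivAt.comp_sub_const u w)
  have h2w' : (u + w) - (u - w) ∉ periodLattice τ := by rwa [add_sub_sub_cancel, ← two_mul]
  rw [hd.deriv]
  rcases (thetaPair_eq_zero_iff hτ).1 hu with h | h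
  · obtain ⟨h0, hd0⟩ := ellTheta_eq_zero_and_deriv_ne_zero hτ h
    rw [h0, zero_mul, add_zero]
    exact mul_ne_zero hd0 fun h' => h2w' (sub_mem h ((ellTheta_eq_zero_iff hτ).1 h'))
  · obtain ⟨h0, hd0⟩ := ellTheta_eq_zero_and_deriv_ne_zero hτ h
    rw [h0, mul_zero, zero_add]
    exact mul_ne_zero (fun h' => h2w' (sub_mem ((ellTheta_eq_zero_iff hτ).1 h') h)) hd0

lemma thetaPair_three_term_of_generic (hτ : 0 < τ.im) {a v : ℂ} (h2v : 2 * v ∉ periodLattice τ)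
    (hav : a + v ∉ periodLattice τ) (hav' : a - v ∉ periodLattice τ) (b u : ℂ) :
    thetaPair τ a u * thetaPair τ b v - thetaPair τ b u * thetaPair τ a v =
      thetaPair τ b a * thetaPair τ v u := by
  set F : ℂ → ℂ := fun u =>
    thetaPair τ a u * thetaPair τ b v - thetaPair τ b u * thetaPair τ a v -
      thetaPair τ b a * thetaPair τ v u
  have hP := differentiable_thetaPair hτ
  have hF : Differentiable ℂ F :=
    (((hP a).mul_const _).sub ((hP b).mul_const _)).sub ((hP v).const_mul _)
  have hF₁ : Periodic F 1 := fun u => by simp only [F, thetaPair_add_one]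
  have hFτ (u : ℂ) : F (u + τ) = cexp (-(2 * π * I * (τ + 2 * u))) * F u := by
    simp only [F, thetaPair_add_tau hτ]; ring
  have hFzero {u : ℂ} (hu : thetaPair τ v u = 0) : F u = 0 := by
    have htransport {w : ℂ} (hw : w ∈ periodLattice τ) (z : ℂ) : F (z + w) = 0 ↔ F z = 0 :=
      add_mem_periodLattice_iff (P := fun z => F z = 0) (fun z => by rw [hF₁])
        (apply_add_eq_zero_iff_of_quasiperiodic (fun _ => Complex.exp_ne_zero _) hFτ) hw z
    have hFv : F v = 0 := by simp only [F, thetaPair_self]; ring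
    have hFneg : F (-v) = F v := by simp only [F, thetaPair_neg]
    rcases (thetaPair_eq_zero_iff hτ).1 hu with h | h
    · simpa using (htransport h (-v)).2 (hFneg.trans hFv)
    · simpa using (htransport h v).2 hFv
  obtain ⟨c, hc⟩ := exists_eq_const_mul_of_quasiperiodic hτ.ne' hF (hP v) (by fun_prop)
    (fun _ => Complex.exp_ne_zero _) hF₁ (thetaPair_add_one τ v) hFτ (thetaPair_add_tau hτ v)
    fun u hu => ⟨hFzero hu, deriv_thetaPair_ne_zero hτ h2v hu⟩
  have hFa : F a = 0 := by simp only [F, thetaPair_self, thetaPair_comm τ v a]; ring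
  have hva : thetaPair τ v a ≠ 0 := by
    rw [Ne, thetaPair_eq_zero_iff hτ, not_or]; exact ⟨hav, hav'⟩
  have hc0 : c = 0 := by simpa [hva] using (hc a).symm.trans hFa
  have hFu : F u = 0 := by rw [hc, hc0, zero_mul]
  exact sub_eq_zero.1 hFu

theorem thetaPair_three_term (hτ : 0 < τ.im) (a b u v : ℂ) :
    thetaPair τ a u * thetaPair τ b v - thetaPair τ b u * thetaPair τ a v =
      thetaPair τ b a * thetaPair τ v u := by
  have := (differentiable_ellTheta hτ).continuous
  have hΛ := countable_periodLattice (τ := τ)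
  have hbad : ((fun v => 2 * v) ⁻¹' periodLattice τ ∪ (fun v => a + v) ⁻¹' periodLattice τ ∪
      (fun v => a - v) ⁻¹' periodLattice τ).Countable :=
    ((hΛ.preimage (mul_right_injective₀ two_ne_zero)).union
      (hΛ.preimage (add_right_injective a))).union (hΛ.preimage sub_right_injective)
  have hL : Continuous fun v =>
      thetaPair τ a u * thetaPair τ b v - thetaPair τ b u * thetaPair τ a v := by
    unfold thetaPair; fun_prop
  have hR : Continuous fun v => thetaPair τ b a * thetaPair τ v u := by
    unfold thetaPair; fun_prop
  refine congrFun (Continuous.ext_on (hbad.dense_compl ℂ) hL hR fun v hv => ?_) v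
  simp only [mem_compl_iff, mem_union, mem_preimage, not_or] at hv
  exact thetaPair_three_term_of_generic hτ hv.1.1 hv.1.2 hv.2 b u

lemma ellTheta_summand_sub_swap (hτ : 0 < τ.im) (H x₁ x₂ y₁ y₂ A : ℂ) :
    ellTheta τ (A + y₁ - x₁) * ellTheta τ (y₂ - x₁) * ellTheta τ (H + y₁ - x₂) *
        ellTheta τ (A + H + y₂ - x₂) -
      ellTheta τ (A + y₂ - x₁) * ellTheta τ (y₁ - x₁) * ellTheta τ (H + y₂ - x₂) *
        ellTheta τ (A + H + y₁ - x₂) =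
      -ellTheta τ (H + x₁ - x₂) * ellTheta τ (y₁ - y₂) *
        ellTheta τ (A + H + y₁ + y₂ - (x₁ + x₂)) * ellTheta τ A := by
  -- `u ± a`, `u ± b`, `v ± a`, `v ± b` are the eight arguments on the left-hand side.
  have h := thetaPair_three_term hτ ((y₁ - y₂ - x₁ + x₂ - H) / 2) ((y₂ - y₁ - x₁ + x₂ - H) / 2)
    (A + (H + y₁ + y₂ - x₁ - x₂) / 2) ((H + y₁ + y₂ - x₁ - x₂) / 2)
  rw [← ellTheta_neg]
  simp only [thetaPair] at h
  ring_nf at h ⊢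
  linear_combination h

end ThreeTerm

end

/-- the symmetrized function
β(x₁,x₂,y₁,y₂,α) = Sym_{x₁,x₂}[ϑ(α y₁/x₁) ϑ(y₂/x₁) ϑ(h y₁/x₂) ϑ(α h y₂/x₂)·ϑ(h x₂/x₁)/ϑ(x₂/x₁)]
is symmetric in y₁, y₂ (stated in additive variables, with x = e^{2πiX} etc.). -/
theorem beta_symmetric_in_y (τ : ℂ) (hτ : 0 < τ.im) (H : ℂ)
    (f : ℂ → ℂ → ℂ → ℂ → ℂ → ℂ)
    (hf : ∀ x₁ x₂ y₁ y₂ A : ℂ,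
      f x₁ x₂ y₁ y₂ A =
        ellTheta τ (A + y₁ - x₁) * ellTheta τ (y₂ - x₁) * ellTheta τ (H + y₁ - x₂) *
            ellTheta τ (A + H + y₂ - x₂) * ellTheta τ (H + x₂ - x₁) /
          ellTheta τ (x₂ - x₁))
    (β : ℂ → ℂ → ℂ → ℂ → ℂ → ℂ)
    (hβ : ∀ x₁ x₂ y₁ y₂ A : ℂ,
      β x₁ x₂ y₁ y₂ A = f x₁ x₂ y₁ y₂ A + f x₂ x₁ y₁ y₂ A) :
    ∀ x₁ x₂ y₁ y₂ A : ℂ, β x₁ x₂ y₁ y₂ A = β x₁ x₂ y₂ y₁ A := by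
  intro x₁ x₂ y₁ y₂ A
  have hD : ellTheta τ (x₁ - x₂) = -ellTheta τ (x₂ - x₁) := by rw [← ellTheta_neg, neg_sub]
  rw [hβ, hβ, hf, hf, hf, hf, hD, div_neg, div_neg, ← sub_eq_add_neg, ← sub_eq_add_neg,
    div_sub_div_same, div_sub_div_same]
  congr 1
  have h₁ := ellTheta_summand_sub_swap hτ H x₁ x₂ y₁ y₂ A
  have h₂ := ellTheta_summand_sub_swap hτ H x₂ x₁ y₁ y₂ A
  rw [add_comm x₂ x₁] at h₂
  linear_combination ellTheta τ (H + x₂ - x₁) * h₁ - ellTheta τ (H + x₁ - x₂) * h₂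
end

section
/- Minkowski-sum cancellation for convex polytopes: if P, Q, T are convex polytopes (convex hulls of finite point sets) in ℝⁿ and T + P ⊆ T + Q (Minkowski sums), then P ⊆ Q. -/
open scoped Pointwise

/-! Iterating `T + P ⊆ T + Q` gives `T + k • P ⊆ T + k • Q` for Minkowski multiples, and for
convex `Q` the `k`-fold sum `k • Q` is the dilate `(k : ℝ) • Q`. So for `x ∈ P` and `t₀ ∈ T` we get
`t₀ + k • x = t + k • q` with `t ∈ T`, `q ∈ Q`, i.e. `x - q = k⁻¹ • (t - t₀)`. As `T` is bounded,
`x` lies in the closure of `Q`, which is `Q` itself. -/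

theorem Set.add_nsmul_subset_add_nsmul {M : Type*} [AddCommMonoid M] {T P Q : Set M}
    (h : T + P ⊆ T + Q) (n : ℕ) : T + n • P ⊆ T + n • Q := by
  induction n with
  | zero => rfl
  | succ n ih =>
    calc T + (n + 1) • P = (T + P) + n • P := by rw [succ_nsmul, add_comm (n • P), add_assoc]
      _ ⊆ (T + Q) + n • P := Set.add_subset_add_right h
      _ = (T + n • P) + Q := by rw [add_right_comm]
      _ ⊆ (T + n • Q) + Q := Set.add_subset_add_right ih
      _ = T + (n + 1) • Q := by rw [succ_nsmul, add_assoc]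

theorem Convex.nsmul_subset_smul {𝕜 E : Type*} [Field 𝕜] [LinearOrder 𝕜] [IsStrictOrderedRing 𝕜]
    [AddCommGroup E] [Module 𝕜 E] {Q : Set E} (hQ : Convex 𝕜 Q) (hne : Q.Nonempty) (n : ℕ) :
    n • Q ⊆ (n : 𝕜) • Q := by
  induction n with
  | zero => simp [Set.zero_smul_set hne]
  | succ n ih =>
    calc (n + 1) • Q = n • Q + Q := succ_nsmul Q n
      _ ⊆ (n : 𝕜) • Q + (1 : 𝕜) • Q := by rw [one_smul]; exact Set.add_subset_add_right ih
      _ = ((n + 1 : ℕ) : 𝕜) • Q := by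
        rw [← hQ.add_smul (Nat.cast_nonneg n) zero_le_one, Nat.cast_succ]

theorem subset_of_add_subset_add_of_isBounded {E : Type*} [NormedAddCommGroup E] [NormedSpace ℝ E]
    {T P Q : Set E} (hT : Bornology.IsBounded T) (hTne : T.Nonempty) (hQ : Convex ℝ Q)
    (hQc : IsClosed Q) (h : T + P ⊆ T + Q) : P ⊆ Q := by
  intro x hx
  have hQne : Q.Nonempty := ((hTne.add ⟨x, hx⟩).mono h).of_add_right
  obtain ⟨t₀, ht₀⟩ := hTne
  obtain ⟨r, hr⟩ := (Metric.isBounded_iff_subset_closedBall t₀).1 hT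
  rw [← hQc.closure_eq, Metric.mem_closure_iff]
  intro ε hε
  obtain ⟨n, hn⟩ := exists_nat_gt (r / ε)
  have hn₁ : (0 : ℝ) < n + 1 := n.cast_add_one_pos
  obtain ⟨t, ht, _, ⟨q, hq, rfl⟩, hsum⟩ : t₀ + ((n + 1 : ℕ) : ℝ) • x ∈ T + ((n + 1 : ℕ) : ℝ) • Q :=
    Set.add_subset_add_left (hQ.nsmul_subset_smul hQne _)
      (Set.add_nsmul_subset_add_nsmul h _ (Set.add_mem_add ht₀ (by
        rw [Nat.cast_smul_eq_nsmul]; exact Set.nsmul_mem_nsmul hx)))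
  have hxq : x - q = ((n : ℝ) + 1)⁻¹ • (t - t₀) := by
    rw [eq_inv_smul_iff₀ hn₁.ne']
    push_cast at hsum
    linear_combination (norm := module) -hsum
  refine ⟨q, hq, ?_⟩
  calc dist x q = ((n : ℝ) + 1)⁻¹ * dist t t₀ := by
        rw [dist_eq_norm, hxq, norm_smul, Real.norm_of_nonneg (by positivity), dist_eq_norm]
    _ ≤ ((n : ℝ) + 1)⁻¹ * r := by gcongr; exact hr ht
    _ < ε := by
      rw [inv_mul_lt_iff₀ hn₁]
      rw [div_lt_iff₀ hε] at hn
      linarith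

theorem minkowski_cancellation_general (n : ℕ) (A B C : Set (Fin n → ℝ))
    (hB : B.Finite) (hC : C.Finite) (hCne : C.Nonempty)
    (h : convexHull ℝ C + convexHull ℝ A ⊆ convexHull ℝ C + convexHull ℝ B) :
    convexHull ℝ A ⊆ convexHull ℝ B :=
  subset_of_add_subset_add_of_isBounded (hC.isCompact_convexHull ℝ).isBounded hCne.convexHull
    (convex_convexHull ℝ B) (hB.isCompact_convexHull ℝ).isClosed h

/-- Minkowski-sum cancellation for convex polytopes in ℝⁿ:
if `T + P ⊆ T + Q` then `P ⊆ Q`, where `P, Q, T` are convex hulls of finite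
point sets and `T` is nonempty. -/
theorem minkowski_cancellation (n : ℕ) (A B C : Set (Fin n → ℝ))
    (hA : A.Finite) (hB : B.Finite) (hC : C.Finite) (hCne : C.Nonempty)
    (h : convexHull ℝ C + convexHull ℝ A ⊆ convexHull ℝ C + convexHull ℝ B) :
    convexHull ℝ A ⊆ convexHull ℝ B :=
  minkowski_cancellation_general n A B C hB hC hCne h
end
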